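/- Let f be a non-negative submodular set function on a finite ground set N with f(∅) = 0, let k ≥ 1 and β > 0, let OPT ⊆ N with |OPT| ≤ k, and let ALG be a β-nice algorithm for f with output size bound k' = k. Consider a random partition of N into m parts, and suppose that for every assignment g a set S(g) ⊆ ALG(T_1(g)) ∪ … ∪ ALG(T_m(g)) with |S(g)| ≤ k satisfies f(S(g)) ≥ (1/e)·f( OPT ∩ (ALG(T_1(g)) ∪ … ∪ ALG(T_m(g))) ). Then 𝔼[ max{ f(S), max_{1 ≤ i ≤ m} f(ALG(T_i)) } ] ≥ ( ((1 − 1/m)/e) / (1 + (1 + β)/e) )·f(OPT). -/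

import Mathlib

/-!
Order `OPT` and write `f OPT = ∑_{a ∈ OPT} Δ(a, R_a)` with `R_a` the elements of `OPT` before `a`.
For an assignment `g`, the terms with `a ∈ C(g) = ⋃ᵢ ALG(T_i)` add up to at most `f(OPT ∩ C(g))`
by submodularity. The other terms are handled by an exchange argument: moving `a` into part `i`
leaves `a ∉ C` only if `ALG` rejects `a` from `T_i ∪ {a}`, and then niceness gives
`ALG(T_i ∪ {a}) = ALG(T_i)` and `Δ(a, ALG T_i) ≤ β f(ALG T_i)/k`. Summing over `a` and `i` and
using submodularity again, the missed mass over all `m` moves is at most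
`(1 + β) ∑ᵢ f(ALG T_i) + f OPT` minus the selected mass. Every assignment arises from exactly `m`
moves of each `a`, so averaging over `g` gives `(m - 1) 𝔼[missed] ≤ (1 + β) m 𝔼[maxᵢ f(ALG T_i)]`,
and `f(S) ≥ f(OPT ∩ C)/e` finishes the bound.
-/

open Finset

/-- The part of a random partition: `T_i(g) = {x : g x = i}`. -/
def part {α : Type*} [Fintype α] [DecidableEq α] {m : ℕ} (g : α → Fin m) (i : Fin m) :
    Finset α :=
  Finset.univ.filter fun a => g a = i

section SetFunction

variable {α : Type*}

def prefixBy (r : α → ℕ) (s : Finset α) (a : α) : Finset α := s.filter fun b => r b < r a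

theorem notMem_prefixBy (r : α → ℕ) (s : Finset α) (a : α) : a ∉ prefixBy r s a := by
  simp [prefixBy]

variable [DecidableEq α]

def marginal (f : Finset α → ℝ) (x : α) (X : Finset α) : ℝ := f (insert x X) - f X

def IsSubmodular (f : Finset α → ℝ) : Prop :=
  ∀ X Y : Finset α, X ⊆ Y → ∀ x, x ∉ Y → marginal f x Y ≤ marginal f x X

theorem IsSubmodular.sub_le_of_disjoint {f : Finset α → ℝ} (hf : IsSubmodular f)
    {X Y : Finset α} (hXY : X ⊆ Y) {D : Finset α} (hD : Disjoint D Y) :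
    f (Y ∪ D) - f Y ≤ f (X ∪ D) - f X := by
  induction D using Finset.induction_on with
  | empty => simp
  | insert d D hd ih =>
    rw [insert_eq, disjoint_union_left, disjoint_singleton_left] at hD
    have hmarg := hf (X ∪ D) (Y ∪ D) (union_subset_union_left hXY) d (by simp [hD.1, hd])
    rw [union_insert, union_insert]
    unfold marginal at hmarg
    linarith [ih hD.2]

theorem IsSubmodular.sub_biUnion_le_sum {f : Finset α → ℝ} (hf : IsSubmodular f)
    {ι : Type*} [DecidableEq ι] (X : Finset α) (A : ι → Finset α) (s : Finset ι)
    (hA : (s : Set ι).PairwiseDisjoint A) :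
    f (X ∪ s.biUnion A) - f X ≤ ∑ i ∈ s, (f (X ∪ A i) - f X) := by
  induction s using Finset.induction_on with
  | empty => simp
  | insert i s hi ih =>
    rw [coe_insert, Set.pairwiseDisjoint_insert_of_notMem (by simpa)] at hA
    have hdisj : Disjoint (A i \ X) (X ∪ s.biUnion A) := by
      rw [disjoint_union_right, disjoint_biUnion_right]
      exact ⟨sdiff_disjoint, fun j hj => (hA.2 j hj).mono_left sdiff_subset⟩
    have key := hf.sub_le_of_disjoint subset_union_left hdisj
    have hunion : X ∪ s.biUnion A ∪ A i \ X = X ∪ (insert i s).biUnion A := by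
      ext; simp only [mem_union, mem_sdiff, mem_biUnion, mem_insert]; grind
    rw [union_sdiff_self_eq_union, hunion] at key
    rw [sum_insert hi]
    linarith [ih hA.1]

theorem sum_sub_prefixBy {M : Type*} [AddCommGroup M] (F : Finset α → M) {r : α → ℕ}
    (hr : Function.Injective r) (s : Finset α) :
    ∑ a ∈ s, (F (insert a (prefixBy r s a)) - F (prefixBy r s a)) = F s - F ∅ := by
  induction s using Finset.induction_on_max_value r with
  | empty => simp
  | insert a s ha hmax ih =>
    have hprefix_a : prefixBy r (insert a s) a = s := by
      ext b
      simp only [prefixBy, mem_filter, mem_insert]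
      refine ⟨fun ⟨hb, hlt⟩ => hb.resolve_left ?_, fun hb => ⟨Or.inr hb, ?_⟩⟩
      · rintro rfl
        exact lt_irrefl _ hlt
      · exact (hmax b hb).lt_of_ne (hr.ne (ne_of_mem_of_not_mem hb ha))
    have hprefix_s : ∀ b ∈ s, prefixBy r (insert a s) b = prefixBy r s b := by
      intro b hb
      rw [prefixBy, filter_insert, if_neg (hmax b hb).not_gt, prefixBy]
    rw [sum_insert ha, hprefix_a, sum_congr rfl fun b hb => by rw [hprefix_s b hb], ih]
    abel

theorem sum_marginal_prefixBy (f : Finset α → ℝ) {r : α → ℕ} (hr : Function.Injective r)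
    (s : Finset α) : ∑ a ∈ s, marginal f a (prefixBy r s a) = f s - f ∅ :=
  sum_sub_prefixBy f hr s

theorem sum_marginal_prefixBy_union (f : Finset α → ℝ) {r : α → ℕ}
    (hr : Function.Injective r) (s W : Finset α) :
    ∑ a ∈ s, marginal f a (prefixBy r s a ∪ W) = f (s ∪ W) - f W := by
  simpa [marginal, insert_union] using sum_sub_prefixBy (fun X => f (X ∪ W)) hr s

theorem IsSubmodular.sum_marginal_prefixBy_le {f : Finset α → ℝ} (hf : IsSubmodular f)
    {r : α → ℕ} (hr : Function.Injective r) {s t : Finset α} (hts : t ⊆ s) :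
    ∑ a ∈ t, marginal f a (prefixBy r s a) ≤ f t - f ∅ := by
  calc ∑ a ∈ t, marginal f a (prefixBy r s a)
      ≤ ∑ a ∈ t, marginal f a (prefixBy r t a) :=
        sum_le_sum fun a _ => hf _ _ (filter_subset_filter _ hts) a (notMem_prefixBy r s a)
    _ = f t - f ∅ := sum_marginal_prefixBy f hr t

theorem natCast_mul_div_le {n k : ℕ} (h : n ≤ k) {x : ℝ} (hx : 0 ≤ x) :
    (n : ℝ) * (x / k) ≤ x := by
  rw [mul_div_left_comm]
  exact mul_le_of_le_one_right hx (div_le_one_of_le₀ (by exact_mod_cast h) k.cast_nonneg)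

structure IsNice (f : Finset α → ℝ) (ALG : Finset α → Finset α) (β : ℝ) (k : ℕ) : Prop where
  subset : ∀ T, ALG T ⊆ T
  erase_eq : ∀ T, ∀ x ∈ T \ ALG T, ALG (T.erase x) = ALG T
  marginal_le : ∀ T, ∀ x ∈ T \ ALG T, marginal f x (ALG T) ≤ β * f (ALG T) / k

namespace IsNice

variable {f : Finset α → ℝ} {ALG : Finset α → Finset α} {β : ℝ} {k : ℕ}

theorem insert_eq_of_notMem (hALG : IsNice f ALG β k) {T : Finset α} {x : α}
    (hx : x ∉ ALG (insert x T)) : ALG (insert x T) = ALG T := by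
  by_cases hxT : x ∈ T
  · rw [insert_eq_of_mem hxT]
  · have := hALG.erase_eq (insert x T) x (mem_sdiff.2 ⟨mem_insert_self x T, hx⟩)
    rwa [erase_insert hxT, eq_comm] at this

theorem marginal_le_of_notMem (hALG : IsNice f ALG β k) {T : Finset α} {x : α}
    (hx : x ∉ ALG (insert x T)) : marginal f x (ALG T) ≤ β * f (ALG T) / k := by
  have := hALG.marginal_le (insert x T) x (mem_sdiff.2 ⟨mem_insert_self x T, hx⟩)
  rwa [hALG.insert_eq_of_notMem hx] at this

/-- An element `a` is *rejected* by `T` if `ALG` drops it once it is added to `T`, and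
*selected* by `T` if it lies in `ALG T`. -/
theorem rejected_add_selected_le (hALG : IsNice f ALG β k) (hf : IsSubmodular f)
    (hnonneg : ∀ S, 0 ≤ f S) (hβ : 0 ≤ β) (T : Finset α) {a : α} {R : Finset α} (haR : a ∉ R) :
    (if a ∈ ALG (insert a T) then 0 else marginal f a R) + (if a ∈ ALG T then marginal f a R else 0)
      ≤ β * f (ALG T) / k + (marginal f a R - marginal f a (R ∪ ALG T)) := by
  have hc : 0 ≤ β * f (ALG T) / k := by have := hnonneg (ALG T); positivity
  by_cases hA : a ∈ ALG T
  · have hA' : a ∈ ALG (insert a T) := by rwa [insert_eq_of_mem (hALG.subset T hA)]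
    have h0 : marginal f a (R ∪ ALG T) = 0 := by
      simp [marginal, insert_eq_of_mem (mem_union_right R hA)]
    simp only [hA, hA', h0, if_true]
    linarith
  · have hdecr := hf R (R ∪ ALG T) subset_union_left a (by simp [haR, hA])
    by_cases hA' : a ∈ ALG (insert a T)
    · simp only [hA, hA', if_true, if_false]
      linarith
    · have hdecr' := hf (ALG T) (R ∪ ALG T) subset_union_right a (by simp [haR, hA])
      have := hALG.marginal_le_of_notMem hA'
      simp only [hA, hA', if_false]
      linarith

theorem sum_rejected_add_sum_selected_le (hALG : IsNice f ALG β k) (hf : IsSubmodular f)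
    (hnonneg : ∀ S, 0 ≤ f S) (hempty : f ∅ = 0) (hβ : 0 ≤ β) {r : α → ℕ}
    (hr : Function.Injective r) {OPT : Finset α} (hOPT : #OPT ≤ k) (T : Finset α) :
    ∑ a ∈ OPT, (if a ∈ ALG (insert a T) then 0 else marginal f a (prefixBy r OPT a))
      + ∑ a ∈ OPT ∩ ALG T, marginal f a (prefixBy r OPT a)
      ≤ β * f (ALG T) + f OPT - (f (OPT ∪ ALG T) - f (ALG T)) := by
  rw [← sum_ite_mem, ← sum_add_distrib]
  calc _ ≤ ∑ a ∈ OPT, (β * f (ALG T) / k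
          + (marginal f a (prefixBy r OPT a) - marginal f a (prefixBy r OPT a ∪ ALG T))) :=
        sum_le_sum fun a _ =>
          hALG.rejected_add_selected_le hf hnonneg hβ T (notMem_prefixBy r OPT a)
    _ = #OPT * (β * f (ALG T) / k) + f OPT - (f (OPT ∪ ALG T) - f (ALG T)) := by
        rw [sum_add_distrib, sum_sub_distrib, sum_const, nsmul_eq_mul, sum_marginal_prefixBy f hr,
          sum_marginal_prefixBy_union f hr, hempty, sub_zero, add_sub_assoc]
    _ ≤ _ := by linarith [natCast_mul_div_le hOPT (mul_nonneg hβ (hnonneg (ALG T)))]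

end IsNice

end SetFunction

theorem sum_sum_update {ι β M : Type*} [Fintype ι] [DecidableEq ι] [Fintype β]
    [AddCommMonoid M] (x : ι) (F : (ι → β) → M) :
    ∑ g : ι → β, ∑ b : β, F (Function.update g x b) = Fintype.card β • ∑ g, F g := by
  have hinv : Function.Involutive fun p : (ι → β) × β => (Function.update p.1 x p.2, p.1 x) := by
    rintro ⟨g, b⟩
    simp
  calc ∑ g : ι → β, ∑ b : β, F (Function.update g x b)
      = ∑ p : (ι → β) × β, F (hinv.toPerm _ p).1 := (Fintype.sum_prod_type' _).symm
    _ = ∑ p : (ι → β) × β, F p.1 := Equiv.sum_comp _ fun p : (ι → β) × β => F p.1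
    _ = Fintype.card β • ∑ g, F g := by
        rw [Fintype.sum_prod_type, ← sum_nsmul]
        simp

theorem sum_sum_sum_update {ι β M : Type*} [Fintype ι] [DecidableEq ι] [Fintype β]
    [AddCommMonoid M] (s : Finset ι) (F : (ι → β) → ι → M) :
    ∑ g : ι → β, ∑ b : β, ∑ a ∈ s, F (Function.update g a b) a
      = Fintype.card β • ∑ g, ∑ a ∈ s, F g a := by
  calc _ = ∑ g : ι → β, ∑ a ∈ s, ∑ b : β, F (Function.update g a b) a :=
        sum_congr rfl fun g _ => sum_comm
    _ = ∑ a ∈ s, ∑ g : ι → β, ∑ b : β, F (Function.update g a b) a := sum_comm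
    _ = ∑ a ∈ s, Fintype.card β • ∑ g, F g a :=
        sum_congr rfl fun a _ => sum_sum_update a (F · a)
    _ = _ := by rw [← smul_sum, sum_comm]

section Partition

variable {α : Type*} [Fintype α] [DecidableEq α] {m : ℕ}

@[simp]
theorem mem_part {g : α → Fin m} {i : Fin m} {a : α} : a ∈ part g i ↔ g a = i := by
  simp [part]

theorem part_update_self (g : α → Fin m) (x : α) (i : Fin m) :
    part (Function.update g x i) i = insert x (part g i) := by
  ext a
  by_cases hax : a = x <;> simp [hax]

theorem pairwiseDisjoint_ALG_part {ALG : Finset α → Finset α} (hALG : ∀ T, ALG T ⊆ T)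
    (g : α → Fin m) (s : Set (Fin m)) : s.PairwiseDisjoint fun i => ALG (part g i) := by
  intro i _ j _ hij
  refine disjoint_of_subset_left (hALG _) (disjoint_of_subset_right (hALG _) ?_)
  exact disjoint_left.2 fun a hi hj => hij ((mem_part.1 hi).symm.trans (mem_part.1 hj))

def algUnion (ALG : Finset α → Finset α) (g : α → Fin m) : Finset α :=
  univ.biUnion fun i => ALG (part g i)

theorem mem_algUnion {ALG : Finset α → Finset α} (hALG : ∀ T, ALG T ⊆ T) (g : α → Fin m)
    (a : α) : a ∈ algUnion ALG g ↔ a ∈ ALG (part g (g a)) := by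
  refine ⟨fun h => ?_, fun h => mem_biUnion.2 ⟨g a, mem_univ _, h⟩⟩
  obtain ⟨i, -, hi⟩ := mem_biUnion.1 h
  rwa [mem_part.1 (hALG _ hi)]

theorem mem_algUnion_update {ALG : Finset α → Finset α} (hALG : ∀ T, ALG T ⊆ T)
    (g : α → Fin m) (a : α) (i : Fin m) :
    a ∈ algUnion ALG (Function.update g a i) ↔ a ∈ ALG (insert a (part g i)) := by
  rw [mem_algUnion hALG, Function.update_self, part_update_self]

end Partition

namespace IsNice

variable {α : Type*} [Fintype α] [DecidableEq α] {m : ℕ} {f : Finset α → ℝ}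
  {ALG : Finset α → Finset α} {β : ℝ} {k : ℕ} {OPT : Finset α}

theorem sum_rejected_add_sum_selected_le_of_partition (hALG : IsNice f ALG β k)
    (hf : IsSubmodular f) (hnonneg : ∀ S, 0 ≤ f S) (hempty : f ∅ = 0) (hβ : 0 ≤ β)
    {r : α → ℕ} (hr : Function.Injective r) (hOPT : #OPT ≤ k) (g : α → Fin m) :
    ∑ i, ∑ a ∈ OPT, (if a ∈ algUnion ALG (Function.update g a i)
        then 0 else marginal f a (prefixBy r OPT a))
      + ∑ a ∈ OPT ∩ algUnion ALG g, marginal f a (prefixBy r OPT a)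
      ≤ (1 + β) * ∑ i, f (ALG (part g i)) + f OPT := by
  have hdisj := pairwiseDisjoint_ALG_part hALG.subset g (univ : Finset (Fin m))
  have hunion := hf.sub_biUnion_le_sum OPT (fun i => ALG (part g i)) univ hdisj
  have hselected :
      ∑ a ∈ OPT ∩ algUnion ALG g, marginal f a (prefixBy r OPT a)
      = ∑ i, ∑ a ∈ OPT ∩ ALG (part g i), marginal f a (prefixBy r OPT a) := by
    rw [algUnion, inter_biUnion, sum_biUnion (hdisj.mono fun i => inter_subset_right)]
  have hsplit : ∑ i : Fin m, (β * f (ALG (part g i)) + f OPT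
        - (f (OPT ∪ ALG (part g i)) - f (ALG (part g i))))
      = (1 + β) * ∑ i, f (ALG (part g i)) - ∑ i, (f (OPT ∪ ALG (part g i)) - f OPT) := by
    rw [add_mul, one_mul, mul_sum, ← sum_add_distrib, ← sum_sub_distrib]
    exact sum_congr rfl fun i _ => by ring
  simp only [mem_algUnion_update hALG.subset]
  rw [hselected, ← sum_add_distrib]
  calc _ ≤ ∑ i : Fin m, (β * f (ALG (part g i)) + f OPT
          - (f (OPT ∪ ALG (part g i)) - f (ALG (part g i)))) :=
        sum_le_sum fun i _ =>
          hALG.sum_rejected_add_sum_selected_le hf hnonneg hempty hβ hr hOPT (part g i)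
    _ ≤ _ := by linarith [hnonneg (OPT ∪ univ.biUnion fun i => ALG (part g i))]

theorem sum_rejected_add_sum_selected_le_of_random_partition [NeZero m]
    (hALG : IsNice f ALG β k) (hf : IsSubmodular f) (hnonneg : ∀ S, 0 ≤ f S) (hempty : f ∅ = 0)
    (hβ : 0 ≤ β) {r : α → ℕ} (hr : Function.Injective r) (hOPT : #OPT ≤ k) :
    m * ∑ g : α → Fin m, ∑ a ∈ OPT,
        (if a ∈ algUnion ALG g then 0 else marginal f a (prefixBy r OPT a))
      + ∑ g : α → Fin m, ∑ a ∈ OPT ∩ algUnion ALG g, marginal f a (prefixBy r OPT a)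
      ≤ (1 + β) * (m * ∑ g : α → Fin m, univ.sup' univ_nonempty fun i => f (ALG (part g i)))
        + (m : ℝ) ^ Fintype.card α * f OPT := by
  have hexchange := sum_sum_sum_update OPT fun (g : α → Fin m) a =>
    if a ∈ algUnion ALG g then 0 else marginal f a (prefixBy r OPT a)
  rw [Fintype.card_fin, nsmul_eq_mul] at hexchange
  have hsup : ∑ g : α → Fin m, ∑ i, f (ALG (part g i))
      ≤ m * ∑ g : α → Fin m, univ.sup' univ_nonempty fun i => f (ALG (part g i)) := by
    rw [mul_sum]
    refine sum_le_sum fun g _ => ?_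
    simpa using sum_le_card_nsmul univ (fun i => f (ALG (part g i))) _ fun i _ =>
      le_sup' (fun j => f (ALG (part g j))) (mem_univ i)
  rw [← hexchange, ← sum_add_distrib]
  calc _ ≤ ∑ g : α → Fin m, ((1 + β) * ∑ i, f (ALG (part g i)) + f OPT) :=
        sum_le_sum fun g _ =>
          hALG.sum_rejected_add_sum_selected_le_of_partition hf hnonneg hempty hβ hr hOPT g
    _ ≤ _ := by
        rw [sum_add_distrib, ← mul_sum, sum_const, card_univ, Fintype.card_fun,
          Fintype.card_fin, nsmul_eq_mul, Nat.cast_pow]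
        gcongr

theorem one_sub_div_mul_le_sum_add_sum_sup' [NeZero m] (hALG : IsNice f ALG β k)
    (hf : IsSubmodular f) (hnonneg : ∀ S, 0 ≤ f S) (hempty : f ∅ = 0) (hβ : 0 ≤ β)
    (hOPT : #OPT ≤ k) :
    (1 - 1 / (m : ℝ)) * ((m : ℝ) ^ Fintype.card α) * f OPT
      ≤ (∑ g : α → Fin m, f (OPT ∩ algUnion ALG g))
        + (1 + β) * ∑ g : α → Fin m, univ.sup' univ_nonempty fun i => f (ALG (part g i)) := by
  obtain ⟨r, hr⟩ : ∃ r : α → ℕ, Function.Injective r :=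
    ⟨_, Fin.val_injective.comp (Fintype.equivFin α).injective⟩
  have hbound := hALG.sum_rejected_add_sum_selected_le_of_random_partition (m := m)
    hf hnonneg hempty hβ hr hOPT
  set selected := ∑ g : α → Fin m, ∑ a ∈ OPT ∩ algUnion ALG g, marginal f a (prefixBy r OPT a)
  set rejected := ∑ g : α → Fin m, ∑ a ∈ OPT,
    (if a ∈ algUnion ALG g then 0 else marginal f a (prefixBy r OPT a))
  have htelescope := sum_marginal_prefixBy f hr OPT
  rw [hempty, sub_zero] at htelescope
  have hsum : selected + rejected = (m : ℝ) ^ Fintype.card α * f OPT := by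
    rw [← sum_add_distrib, sum_congr rfl (g := fun _ => f OPT), sum_const, card_univ,
      Fintype.card_fun, Fintype.card_fin, nsmul_eq_mul, Nat.cast_pow]
    intro g _
    rw [← htelescope, ← sum_ite_mem, ← sum_add_distrib]
    exact sum_congr rfl fun a _ => by by_cases ha : a ∈ algUnion ALG g <;> simp [ha]
  have hselected : selected ≤ ∑ g, f (OPT ∩ algUnion ALG g) :=
    sum_le_sum fun g _ => by
      simpa [hempty] using
        hf.sum_marginal_prefixBy_le hr (inter_subset_left (s₂ := algUnion ALG g))
  have hFnonneg : 0 ≤ ∑ g : α → Fin m, f (OPT ∩ algUnion ALG g) :=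
    sum_nonneg fun g _ => hnonneg _
  have hm : (1 : ℝ) ≤ m := by exact_mod_cast NeZero.one_le
  have key : ((m : ℝ) - 1) * ((m : ℝ) ^ Fintype.card α * f OPT)
      ≤ m * (∑ g : α → Fin m, f (OPT ∩ algUnion ALG g)
        + (1 + β) * ∑ g : α → Fin m, univ.sup' univ_nonempty fun i => f (ALG (part g i))) := by
    nlinarith [mul_le_mul_of_nonneg_left hselected (sub_nonneg.2 hm)]
  rw [show (1 - 1 / (m : ℝ)) * (m : ℝ) ^ Fintype.card α * f OPT
      = ((m : ℝ) - 1) * ((m : ℝ) ^ Fintype.card α * f OPT) / m by field_simp,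
    div_le_iff₀ (by linarith)]
  linarith

end IsNice

theorem stmt_8_general {α : Type*} [DecidableEq α] [Fintype α] {m : ℕ} [NeZero m]
    (f : Finset α → ℝ)
    (hsub : ∀ X Y : Finset α, X ⊆ Y → ∀ x, x ∉ Y →
      f (insert x Y) - f Y ≤ f (insert x X) - f X)
    (hnonneg : ∀ S : Finset α, 0 ≤ f S)
    (hempty : f ∅ = 0)
    (k : ℕ) (β : ℝ) (hβ : 0 < β)
    (OPT : Finset α) (hOPTcard : OPT.card ≤ k)
    (ALG : Finset α → Finset α)
    (hALGsub : ∀ T, ALG T ⊆ T)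
    (hALGind : ∀ T : Finset α, ∀ x ∈ T \ ALG T, ALG (T.erase x) = ALG T)
    (hALGmarg : ∀ T : Finset α, ∀ x ∈ T \ ALG T,
      f (insert x (ALG T)) - f (ALG T) ≤ β * f (ALG T) / k)
    (S : (α → Fin m) → Finset α)
    (hSval : ∀ g, f (S g) ≥ (1 / Real.exp 1) *
      f (OPT ∩ Finset.univ.biUnion fun i => ALG (part g i))) :
    (∑ g : α → Fin m,
        max (f (S g)) (Finset.univ.sup' Finset.univ_nonempty fun i => f (ALG (part g i)))) /
        (m : ℝ) ^ Fintype.card α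
      ≥ (((1 - 1 / (m : ℝ)) / Real.exp 1) / (1 + (1 + β) / Real.exp 1)) * f OPT := by
  have hcore := IsNice.one_sub_div_mul_le_sum_add_sum_sup' (m := m)
    ⟨hALGsub, hALGind, hALGmarg⟩ hsub hnonneg hempty hβ.le hOPTcard
  have hselected : ∑ g : α → Fin m, f (OPT ∩ algUnion ALG g)
      ≤ Real.exp 1 * ∑ g : α → Fin m,
        max (f (S g)) (univ.sup' univ_nonempty fun i => f (ALG (part g i))) := by
    rw [mul_sum]
    refine sum_le_sum fun g _ => ?_
    have := hSval g
    rw [ge_iff_le, one_div_mul_eq_div, div_le_iff₀' (Real.exp_pos 1)] at this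
    exact this.trans (mul_le_mul_of_nonneg_left (le_max_left _ _) (Real.exp_pos 1).le)
  have hbest : ∑ g : α → Fin m, univ.sup' univ_nonempty (fun i => f (ALG (part g i)))
      ≤ ∑ g : α → Fin m,
        max (f (S g)) (univ.sup' univ_nonempty fun i => f (ALG (part g i))) :=
    sum_le_sum fun g _ => le_max_right _ _
  have hconst : ((1 - 1 / (m : ℝ)) / Real.exp 1) / (1 + (1 + β) / Real.exp 1)
      = (1 - 1 / (m : ℝ)) / (Real.exp 1 + 1 + β) := by
    field_simp
    ring
  rw [ge_iff_le, hconst, div_mul_eq_mul_div, div_le_div_iff₀ (by linarith [Real.exp_pos 1])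
    (pow_pos (Nat.cast_pos.2 (NeZero.pos m)) _)]
  linarith [mul_le_mul_of_nonneg_left hbest (by linarith : (0 : ℝ) ≤ 1 + β)]

/-- overall distributed approximation factor for non-monotone (non-negative)
submodular maximization: if, for every realization of the random partition, a post-processing
step returns `S(g) ⊆ ⋃_i ALG(T_i(g))` of size at most `k` with
`f(S(g)) ≥ (1/e)·f(OPT ∩ ⋃_i ALG(T_i(g)))`, then
`𝔼[max(f(S), max_i f(ALG(T_i)))] ≥ (((1−1/m)/e)/(1+(1+β)/e))·f(OPT)`. -/
theorem stmt_8 {α : Type*} [DecidableEq α] [Fintype α] {m : ℕ} [NeZero m]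
    (f : Finset α → ℝ)
    (hsub : ∀ X Y : Finset α, X ⊆ Y → ∀ x, x ∉ Y →
      f (insert x Y) - f Y ≤ f (insert x X) - f X)
    (hnonneg : ∀ S : Finset α, 0 ≤ f S)
    (hempty : f ∅ = 0)
    (k : ℕ) (hk : 1 ≤ k) (β : ℝ) (hβ : 0 < β)
    (OPT : Finset α) (hOPTcard : OPT.card ≤ k)
    (ALG : Finset α → Finset α)
    (hALGsub : ∀ T, ALG T ⊆ T)
    (hALGcard : ∀ T, (ALG T).card ≤ k)
    (hALGind : ∀ T : Finset α, ∀ x ∈ T \ ALG T, ALG (T.erase x) = ALG T)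
    (hALGmarg : ∀ T : Finset α, ∀ x ∈ T \ ALG T,
      f (insert x (ALG T)) - f (ALG T) ≤ β * f (ALG T) / k)
    (S : (α → Fin m) → Finset α)
    (hSsub : ∀ g, S g ⊆ Finset.univ.biUnion fun i => ALG (part g i))
    (hScard : ∀ g, (S g).card ≤ k)
    (hSval : ∀ g, f (S g) ≥ (1 / Real.exp 1) *
      f (OPT ∩ Finset.univ.biUnion fun i => ALG (part g i))) :
    (∑ g : α → Fin m,
        max (f (S g)) (Finset.univ.sup' Finset.univ_nonempty fun i => f (ALG (part g i)))) /
        (m : ℝ) ^ Fintype.card α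
      ≥ (((1 - 1 / (m : ℝ)) / Real.exp 1) / (1 + (1 + β) / Real.exp 1)) * f OPT :=
  stmt_8_general f hsub hnonneg hempty k β hβ OPT hOPTcard ALG hALGsub hALGind hALGmarg S hSval
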